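/- arXiv:1801.04674 — 6 statements merged into one kernel-verified Lean document; each statement's English description precedes it below -/
import Mathlib

section
/- Let β ∈ ℂ, β ≠ 0, and suppose (β,α₁), (β,α₂) lie on the characteristic surface {λ/β + μ₁α + μ₂β/α = 1} with α₁ ≠ α₂, α₁,α₂ ≠ 0. Define C(β,α) = μ₂(1 - β/α). Then h_β(y) = C(β,α₂)·β^(y(1)-y(2))·α₁^(y(2)) - C(β,α₁)·β^(y(1)-y(2))·α₂^(y(2)) is Y-harmonic: it satisfies the interior equation λ·h(y+(-1,0)) + μ₁·h(y+(1,1)) + μ₂·h(y+(0,-1)) = h(y) for y(2)>0, and the boundary equation μ₂·h(y) + λ·h(y+(-1,0)) + μ₁·h(y+(1,1)) = h(y) for y(2)=0. -/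
/-- The log-linear function defined by a point (β,α) on the characteristic surface. -/
noncomputable def logLin (β α : ℂ) (y : ℤ × ℤ) : ℂ := β ^ (y.1 - y.2) * α ^ y.2

/-- C(β,α) = μ₂(1 - β/α). -/
noncomputable def Ccoef (mu2 : ℝ) (β α : ℂ) : ℂ := (mu2 : ℂ) * (1 - β / α)

lemma logLin_left (β α : ℂ) (hβ : β ≠ 0) (y1 y2 : ℤ) :
    logLin β α (y1 - 1, y2) = logLin β α (y1, y2) / β := by
  simp only [logLin]
  rw [show y1 - 1 - y2 = (y1 - y2) - 1 by ring, zpow_sub_one₀ hβ]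
  field_simp

lemma logLin_up (β α : ℂ) (hα : α ≠ 0) (y1 y2 : ℤ) :
    logLin β α (y1 + 1, y2 + 1) = logLin β α (y1, y2) * α := by
  simp only [logLin]
  rw [show y1 + 1 - (y2 + 1) = y1 - y2 by ring, zpow_add_one₀ hα]
  ring

lemma logLin_down (β α : ℂ) (hβ : β ≠ 0) (hα : α ≠ 0) (y1 y2 : ℤ) :
    logLin β α (y1, y2 - 1) = logLin β α (y1, y2) * β / α := by
  simp only [logLin]
  rw [show y1 - (y2 - 1) = (y1 - y2) + 1 by ring, zpow_add_one₀ hβ, zpow_sub_one₀ hα]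
  field_simp

/-- for conjugate points (β,α₁), (β,α₂) on the characteristic surface,
h_β = C(β,α₂)[(β,α₁),·] - C(β,α₁)[(β,α₂),·] is Y-harmonic (interior and boundary
conditions of the constrained walk Y on ℤ×ℤ₊). -/
theorem conjugate_combination_Y_harmonic
    (lam mu1 mu2 : ℝ) (hlam : 0 < lam) (hmu1 : 0 < mu1) (hmu2 : 0 < mu2)
    (hsum : lam + mu1 + mu2 = 1)
    (β α₁ α₂ : ℂ) (hβ : β ≠ 0) (hα₁ : α₁ ≠ 0) (hα₂ : α₂ ≠ 0) (hne : α₁ ≠ α₂)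
    (hchar₁ : (lam : ℂ) / β + (mu1 : ℂ) * α₁ + (mu2 : ℂ) * β / α₁ = 1)
    (hchar₂ : (lam : ℂ) / β + (mu1 : ℂ) * α₂ + (mu2 : ℂ) * β / α₂ = 1) :
    ∀ y : ℤ × ℤ, 0 ≤ y.2 →
      (0 < y.2 →
        (lam : ℂ) * (Ccoef mu2 β α₂ * logLin β α₁ (y.1 - 1, y.2)
            - Ccoef mu2 β α₁ * logLin β α₂ (y.1 - 1, y.2))
          + (mu1 : ℂ) * (Ccoef mu2 β α₂ * logLin β α₁ (y.1 + 1, y.2 + 1)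
            - Ccoef mu2 β α₁ * logLin β α₂ (y.1 + 1, y.2 + 1))
          + (mu2 : ℂ) * (Ccoef mu2 β α₂ * logLin β α₁ (y.1, y.2 - 1)
            - Ccoef mu2 β α₁ * logLin β α₂ (y.1, y.2 - 1))
        = Ccoef mu2 β α₂ * logLin β α₁ y - Ccoef mu2 β α₁ * logLin β α₂ y)
      ∧ (y.2 = 0 →
        (mu2 : ℂ) * (Ccoef mu2 β α₂ * logLin β α₁ y - Ccoef mu2 β α₁ * logLin β α₂ y)
          + (lam : ℂ) * (Ccoef mu2 β α₂ * logLin β α₁ (y.1 - 1, y.2)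
            - Ccoef mu2 β α₁ * logLin β α₂ (y.1 - 1, y.2))
          + (mu1 : ℂ) * (Ccoef mu2 β α₂ * logLin β α₁ (y.1 + 1, y.2 + 1)
            - Ccoef mu2 β α₁ * logLin β α₂ (y.1 + 1, y.2 + 1))
        = Ccoef mu2 β α₂ * logLin β α₁ y - Ccoef mu2 β α₁ * logLin β α₂ y) := by
  rintro ⟨y1, y2⟩ _
  simp only
  constructor
  · intro _
    rw [logLin_left β α₁ hβ, logLin_left β α₂ hβ, logLin_up β α₁ hα₁, logLin_up β α₂ hα₂,
      logLin_down β α₁ hβ hα₁, logLin_down β α₂ hβ hα₂]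
    simp only [Ccoef]
    linear_combination ((mu2 : ℂ) * (1 - β / α₂) * logLin β α₁ (y1, y2)) * hchar₁
      - ((mu2 : ℂ) * (1 - β / α₁) * logLin β α₂ (y1, y2)) * hchar₂
  · rintro rfl
    rw [logLin_left β α₁ hβ, logLin_left β α₂ hβ, logLin_up β α₁ hα₁, logLin_up β α₂ hα₂]
    have hL : logLin β α₁ (y1, 0) = logLin β α₂ (y1, 0) := by
      simp [logLin]
    simp only [Ccoef]
    linear_combination ((mu2 : ℂ) * (1 - β / α₂) * logLin β α₁ (y1, 0)) * hchar₁
      - ((mu2 : ℂ) * (1 - β / α₁) * logLin β α₂ (y1, 0)) * hchar₂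
      + ((mu2 : ℂ) * (1 - β / α₁) * (mu2 : ℂ) * (1 - β / α₂)) * hL
end

section
/- Assume 0 < λ < μ₁, 0 < λ < μ₂, μ₁ ≠ μ₂, λ+μ₁+μ₂=1, ρᵢ=λ/μᵢ. Define W*(y) = ρ₂^(y(1)-y(2)) + ((μ₂-λ)/(μ₂-μ₁))·ρ₁^(y(1)-y(2))·ρ₁^(y(2)) + ((μ₂-λ)/(μ₁-μ₂))·ρ₂^(y(1)-y(2))·ρ₁^(y(2)) for y ∈ ℤ×ℤ₊. Then W* is Y-harmonic: for y(2)>0, λW*(y+(-1,0)) + μ₁W*(y+(1,1)) + μ₂W*(y+(0,-1)) = W*(y), and for y(2)=0, λW*(y+(-1,0)) + μ₁W*(y+(1,1)) + μ₂W*(y) = W*(y). -/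
/-- W*(y) = ρ₂^(y(1)-y(2)) + ((μ₂-λ)/(μ₂-μ₁))ρ₁^(y(1)-y(2))ρ₁^(y(2))
           + ((μ₂-λ)/(μ₁-μ₂))ρ₂^(y(1)-y(2))ρ₁^(y(2)), with ρᵢ = λ/μᵢ. -/
noncomputable def Wstar (lam mu1 mu2 : ℝ) (y : ℤ × ℤ) : ℝ :=
  (lam / mu2) ^ (y.1 - y.2)
    + ((mu2 - lam) / (mu2 - mu1)) * (lam / mu1) ^ (y.1 - y.2) * (lam / mu1) ^ y.2
    + ((mu2 - lam) / (mu1 - mu2)) * (lam / mu2) ^ (y.1 - y.2) * (lam / mu1) ^ y.2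

set_option maxHeartbeats 1000000 in
/-- W* is Y-harmonic for the constrained walk Y on ℤ×ℤ₊. -/
theorem Wstar_Y_harmonic
    (lam mu1 mu2 : ℝ) (hlam : 0 < lam) (h1 : lam < mu1) (h2 : lam < mu2)
    (hne : mu1 ≠ mu2) (hsum : lam + mu1 + mu2 = 1) :
    ∀ y : ℤ × ℤ, 0 ≤ y.2 →
      (0 < y.2 →
        lam * Wstar lam mu1 mu2 (y.1 - 1, y.2)
          + mu1 * Wstar lam mu1 mu2 (y.1 + 1, y.2 + 1)
          + mu2 * Wstar lam mu1 mu2 (y.1, y.2 - 1)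
        = Wstar lam mu1 mu2 y)
      ∧ (y.2 = 0 →
        lam * Wstar lam mu1 mu2 (y.1 - 1, y.2)
          + mu1 * Wstar lam mu1 mu2 (y.1 + 1, y.2 + 1)
          + mu2 * Wstar lam mu1 mu2 y
        = Wstar lam mu1 mu2 y) := by
  have hm1 : (0:ℝ) < mu1 := hlam.trans h1
  have hm2 : (0:ℝ) < mu2 := hlam.trans h2
  have hl : lam = 1 - mu1 - mu2 := by linarith
  subst hl
  have ha : (1 - mu1 - mu2) / mu1 ≠ 0 := div_ne_zero (by linarith) hm1.ne'
  have hb : (1 - mu1 - mu2) / mu2 ≠ 0 := div_ne_zero (by linarith) hm2.ne'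
  have hd : mu1 - mu2 ≠ 0 := sub_ne_zero.mpr hne
  have hd' : mu2 - mu1 ≠ 0 := sub_ne_zero.mpr (Ne.symm hne)
  rintro ⟨x, n⟩ _
  constructor
  · intro _
    simp only [Wstar]
    have e1 : x - 1 - n = x - n - 1 := by ring
    have e2 : x + 1 - (n + 1) = x - n := by ring
    have e3 : x - (n - 1) = x - n + 1 := by ring
    simp only [e1, e2, e3, zpow_sub_one₀ ha, zpow_sub_one₀ hb,
      zpow_add_one₀ ha, zpow_add_one₀ hb]
    simp only [inv_div]
    generalize ((1-mu1-mu2)/mu1 : ℝ)^(x-n) = A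
    generalize ((1-mu1-mu2)/mu2 : ℝ)^(x-n) = B
    generalize ((1-mu1-mu2)/mu1 : ℝ)^n = C
    field_simp
    ring
  · intro hn
    subst hn
    simp only [Wstar]
    have e1 : x - 1 - (0:ℤ) = x - 1 := by ring
    have e2 : x + 1 - ((0:ℤ) + 1) = x := by ring
    have e3 : x - (0:ℤ) = x := by ring
    have e4 : (0:ℤ) + 1 = 1 := by ring
    simp only [e1, e2, e3, e4, zpow_sub_one₀ ha, zpow_sub_one₀ hb, zpow_zero, zpow_one]
    rw [show ((1-mu1-mu2)/mu1 : ℝ)^(x+1) = ((1-mu1-mu2)/mu1)^x * ((1-mu1-mu2)/mu1) from zpow_add_one₀ ha x,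
       show ((1-mu1-mu2)/mu2 : ℝ)^(x+1) = ((1-mu1-mu2)/mu2)^x * ((1-mu1-mu2)/mu2) from zpow_add_one₀ hb x]
    simp only [inv_div]
    generalize ((1-mu1-mu2)/mu1 : ℝ)^x = A
    generalize ((1-mu1-mu2)/mu2 : ℝ)^x = B
    field_simp
    ring
end

section
/- Assume 0 < λ < μ = μ₁ = μ₂ with λ + 2μ = 1 and set ρ = λ/μ. Then the function h(y) = ρ^(y(1)-y(2)) + ((μ-λ)/μ)·ρ^(y(1))·(y(1)-y(2)) on ℤ×ℤ₊ is Y-harmonic: for y(2)>0, λh(y+(-1,0)) + μh(y+(1,1)) + μh(y+(0,-1)) = h(y), and for y(2)=0, λh(y+(-1,0)) + μh(y+(1,1)) + μh(y) = h(y); moreover h(y)=1 whenever y(1)=y(2). -/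
/-- The equal-service-rates limit function
h(y) = ρ^(y(1)-y(2)) + ((μ-λ)/μ)·ρ^(y(1))·(y(1)-y(2)), ρ = λ/μ. -/
noncomputable def hEq (lam mu : ℝ) (y : ℤ × ℤ) : ℝ :=
  (lam / mu) ^ (y.1 - y.2) + ((mu - lam) / mu) * (lam / mu) ^ y.1 * (y.1 - y.2 : ℤ)

/-- in the equal-rates case μ₁ = μ₂ = μ, h is Y-harmonic and equals 1
on the diagonal. -/
theorem equal_rates_harmonic
    (lam mu : ℝ) (hlam : 0 < lam) (h1 : lam < mu) (hsum : lam + 2 * mu = 1) :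
    ∀ y : ℤ × ℤ, 0 ≤ y.2 →
      (0 < y.2 →
        lam * hEq lam mu (y.1 - 1, y.2) + mu * hEq lam mu (y.1 + 1, y.2 + 1)
          + mu * hEq lam mu (y.1, y.2 - 1) = hEq lam mu y)
      ∧ (y.2 = 0 →
        lam * hEq lam mu (y.1 - 1, y.2) + mu * hEq lam mu (y.1 + 1, y.2 + 1)
          + mu * hEq lam mu y = hEq lam mu y)
      ∧ (y.1 = y.2 → hEq lam mu y = 1) := by
  have hmu : (0:ℝ) < mu := lt_trans hlam h1
  have hmu' : mu ≠ 0 := ne_of_gt hmu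
  have hlam' : lam ≠ 0 := ne_of_gt hlam
  have hr : lam / mu ≠ 0 := div_ne_zero hlam' hmu'
  have hl : lam = 1 - 2 * mu := by linarith
  rintro ⟨a, b⟩ hb
  have hA : (lam / mu) ^ a ≠ 0 := zpow_ne_zero _ hr
  have hB : (lam / mu) ^ b ≠ 0 := zpow_ne_zero _ hr
  refine ⟨?_, ?_, ?_⟩
  · intro _
    simp only [hEq, zpow_sub₀ hr, zpow_add₀ hr, zpow_one]
    push_cast
    field_simp
    rw [hl]
    ring
  · intro h0
    simp only at h0
    subst h0
    simp only [hEq, zpow_sub₀ hr, zpow_add₀ hr, zpow_one]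
    push_cast
    field_simp
    rw [hl]
    ring
  · intro hab
    simp only at hab
    subst hab
    simp [hEq]
end

section
/- Let X be the constrained tandem walk on ℤ₊² (increments (1,0),(-1,1),(0,-1) with probabilities λ,μ₁,μ₂, each suppressed when it would leave ℤ₊²) and X̄ the walk with the same increments constrained only on the second coordinate (state space ℤ×ℤ₊), both driven by the same i.i.d. increment sequence and started at the same point X₀=X̄₀∈ℤ₊². Let σ₁ be the first time X hits {x:x(1)=0} and σ₁,₂ the first time after σ₁ at which X hits {x:x(2)=0}. Then X_k(1)+X_k(2) = X̄_k(1)+X̄_k(2) for all k ≤ σ₁,₂. -/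
/-- coupling the tandem walk X (constrained to ℤ₊²) and X̄ (constrained
only in the second coordinate), driven by the same increments and started at the same
point, the sums of components agree up to σ₁,₂ (the first time after the first visit
of X to {x(1)=0} at which X hits {x(2)=0}).  The condition k ≤ σ₁,₂ is expressed as:
no j < k satisfies (j ≥ σ₁ and X_j(2) = 0). -/
theorem sums_agree_until_sigma12
    (lam mu1 mu2 : ℝ) (hlam : 0 < lam) (hmu1 : 0 < mu1) (hmu2 : 0 < mu2)
    (hsum : lam + mu1 + mu2 = 1)
    (I : ℕ → ℤ × ℤ)
    (hI : ∀ k, I k ∈ ({(1, 0), (-1, 1), (0, -1)} : Set (ℤ × ℤ)))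
    (X Xb : ℕ → ℤ × ℤ) (x0 : ℤ × ℤ) (hx0 : 0 ≤ x0.1 ∧ 0 ≤ x0.2)
    (hX0 : X 0 = x0) (hXb0 : Xb 0 = x0)
    (hX : ∀ k, X (k + 1)
        = X k + (if 0 ≤ (X k + I k).1 ∧ 0 ≤ (X k + I k).2 then I k else 0))
    (hXb : ∀ k, Xb (k + 1) = Xb k + (if 0 ≤ (Xb k + I k).2 then I k else 0))
    (k : ℕ)
    (hk : ∀ j < k, ¬((∃ i ≤ j, (X i).1 = 0) ∧ (X j).2 = 0)) :
    (X k).1 + (X k).2 = (Xb k).1 + (Xb k).2 := by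
  suffices h : ∀ n, (∀ j < n, ¬((∃ i ≤ j, (X i).1 = 0) ∧ (X j).2 = 0)) →
      (0 ≤ (X n).1 ∧ 0 ≤ (X n).2 ∧ 0 ≤ (Xb n).2 ∧ (X n).2 ≤ (Xb n).2 ∧
        (X n).1 + (X n).2 = (Xb n).1 + (Xb n).2) ∧
      (X n = Xb n ∨ ∃ i ≤ n, (X i).1 = 0) by
    exact (h k hk).1.2.2.2.2
  intro n
  induction n with
  | zero =>
    intro _
    rw [hX0, hXb0]
    exact ⟨⟨hx0.1, hx0.2, hx0.2, le_refl _, rfl⟩, Or.inl rfl⟩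
  | succ m IH =>
    intro hk'
    obtain ⟨⟨h1, h2, h3, h4, h5⟩, hd⟩ := IH (fun j hj => hk' j (Nat.lt_succ_of_lt hj))
    have hIm := hI m
    simp only [Set.mem_insert_iff, Set.mem_singleton_iff] at hIm
    have hI1 : ((I m).1 = 1 ∧ (I m).2 = 0) ∨ ((I m).1 = -1 ∧ (I m).2 = 1) ∨
        ((I m).1 = 0 ∧ (I m).2 = -1) := by
      rcases hIm with h | h | h <;> simp [h]
    have eX1 := congrArg Prod.fst (hX m)
    have eX2 := congrArg Prod.snd (hX m)
    have eXb1 := congrArg Prod.fst (hXb m)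
    have eXb2 := congrArg Prod.snd (hXb m)
    simp only [Prod.fst_add, Prod.snd_add, apply_ite Prod.fst, apply_ite Prod.snd,
      Prod.fst_zero, Prod.snd_zero] at eX1 eX2 eXb1 eXb2
    rcases hd with heq | hhit
    · have heq1 : (X m).1 = (Xb m).1 := by rw [heq]
      have heq2 : (X m).2 = (Xb m).2 := by rw [heq]
      by_cases h0 : (X m).1 = 0
      · refine ⟨⟨?_, ?_, ?_, ?_, ?_⟩, Or.inr ⟨m, Nat.le_succ m, h0⟩⟩ <;>
          split_ifs at eX1 eX2 eXb1 eXb2 <;> omega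
      · refine ⟨⟨?_, ?_, ?_, ?_, ?_⟩, Or.inl (Prod.ext ?_ ?_)⟩ <;>
          split_ifs at eX1 eX2 eXb1 eXb2 <;> omega
    · have h20 : (X m).2 ≠ 0 := fun h => hk' m (Nat.lt_succ_self m) ⟨hhit, h⟩
      obtain ⟨i, hi, hxi⟩ := hhit
      refine ⟨⟨?_, ?_, ?_, ?_, ?_⟩, Or.inr ⟨i, Nat.le_trans hi (Nat.le_succ m), hxi⟩⟩ <;>
        split_ifs at eX1 eX2 eXb1 eXb2 <;> omega
end

section
/- Assume 0<λ<μ₁, 0<λ<μ₂, μ₁≠μ₂, λ+μ₁+μ₂=1. Let Y be the constrained walk on ℤ×ℤ₊ as above and τ = inf{k : Y_k(1)=Y_k(2)}. Then for all y ∈ ℤ×ℤ₊ with y(1) ≥ y(2): P_y(τ < ∞) = ρ₂^(y(1)-y(2)) + ((μ₂-λ)/(μ₂-μ₁))·ρ₁^(y(1)-y(2))·ρ₁^(y(2)) + ((μ₂-λ)/(μ₁-μ₂))·ρ₂^(y(1)-y(2))·ρ₁^(y(2)), where ρᵢ = λ/μᵢ. -/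
open MeasureTheory

/-- Increment distribution of the limit walk Y: p(-1,0)=λ, p(1,1)=μ₁, p(0,-1)=μ₂. -/
noncomputable def incProb (lam mu1 mu2 : ℝ) (v : ℤ × ℤ) : ℝ :=
  if v = (-1, 0) then lam else if v = (1, 1) then mu1 else if v = (0, -1) then mu2 else 0

/-!
`hitFn`, the right-hand side as a function of the starting point, is harmonic for the walk on
`{z.2 ≥ 0}`, equals `1` on the diagonal and is `O(ρⁿ)`, `ρ = max ρ₁ ρ₂ < 1`, on the level
`z.1 - z.2 = n`. The walk stopped on the diagonal or at level `n` stops almost surely, so optional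
stopping gives `|hitFn y - P(diagonal before level n)| ≤ C ρⁿ`, and letting `n → ∞` yields the
formula. Expectations of the stopped walk are computed by recursion over its first `k` steps,
whose law the cylinder probabilities determine.
-/

open Filter Topology

namespace HittingProbability

open Finset

section StoppedChain

variable {α β : Type*} (S : Finset β) (p : β → ℝ) (step : α → β → α) (D : Set α)

def stepMean (f : α → ℝ) (z : α) : ℝ := ∑ v ∈ S, p v * f (step z v)

open Classical in
/-- `E_z[h(X_{k ∧ τ})]` for the chain `X_{j+1} = step X_j V_j` with i.i.d. `V_j ∈ S` of law `p`,
stopped at its hitting time `τ` of `D`. -/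
noncomputable def stoppedMean (h : α → ℝ) : ℕ → α → ℝ
  | 0, z => h z
  | k + 1, z => if z ∈ D then h z else stepMean S p step (stoppedMean h k) z

def StoppedInvariant (R : Set α) : Prop := ∀ z ∈ R, z ∉ D → ∀ v ∈ S, step z v ∈ R

variable {S p step D} {h : α → ℝ}

lemma stoppedMean_of_mem {z : α} (hz : z ∈ D) (k : ℕ) :
    stoppedMean S p step D h k z = h z := by
  cases k <;> simp [stoppedMean, hz]

lemma stoppedMean_succ_of_notMem {z : α} (hz : z ∉ D) (k : ℕ) :
    stoppedMean S p step D h (k + 1) z = stepMean S p step (stoppedMean S p step D h k) z := by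
  simp [stoppedMean, hz]

lemma stoppedMean_nonneg (hp : ∀ v, 0 ≤ p v) (hh : ∀ x, 0 ≤ h x) (k : ℕ) (z : α) :
    0 ≤ stoppedMean S p step D h k z := by
  induction k generalizing z with
  | zero => exact hh z
  | succ k ih =>
    by_cases hz : z ∈ D
    · rw [stoppedMean_of_mem hz]; exact hh z
    · rw [stoppedMean_succ_of_notMem hz]
      exact sum_nonneg fun v _ => mul_nonneg (hp v) (ih _)

lemma stepMean_le_one (hp : ∀ v, 0 ≤ p v) (hS : ∑ v ∈ S, p v = 1) {f : α → ℝ}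
    (hf : ∀ x, f x ≤ 1) (z : α) : stepMean S p step f z ≤ 1 :=
  calc ∑ v ∈ S, p v * f (step z v) ≤ ∑ v ∈ S, p v * 1 :=
        sum_le_sum fun v _ => mul_le_mul_of_nonneg_left (hf _) (hp v)
    _ = 1 := by simp only [mul_one, hS]

lemma stoppedMean_le_one (hp : ∀ v, 0 ≤ p v) (hS : ∑ v ∈ S, p v = 1) (hh : ∀ x, h x ≤ 1)
    (k : ℕ) (z : α) : stoppedMean S p step D h k z ≤ 1 := by
  induction k generalizing z with
  | zero => exact hh z
  | succ k ih =>
    by_cases hz : z ∈ D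
    · rw [stoppedMean_of_mem hz]; exact hh z
    · rw [stoppedMean_succ_of_notMem hz]; exact stepMean_le_one hp hS ih z

lemma stoppedMean_affine (hS : ∑ v ∈ S, p v = 1) (a b : ℝ) (k : ℕ) (z : α) :
    stoppedMean S p step D (fun x => a + b * h x) k z
      = a + b * stoppedMean S p step D h k z := by
  induction k generalizing z with
  | zero => rfl
  | succ k ih =>
    by_cases hz : z ∈ D
    · rw [stoppedMean_of_mem hz, stoppedMean_of_mem hz]
    · simp only [stoppedMean_succ_of_notMem hz, stepMean, ih, mul_add, sum_add_distrib,
        ← sum_mul, hS, one_mul, mul_sum]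
      congr 1
      exact sum_congr rfl fun v _ => by ring

lemma abs_stoppedMean_sub_le (hp : ∀ v, 0 ≤ p v) (h' : α → ℝ) (k : ℕ) (z : α) :
    |stoppedMean S p step D h k z - stoppedMean S p step D h' k z|
      ≤ stoppedMean S p step D (fun x => |h x - h' x|) k z := by
  induction k generalizing z with
  | zero => exact le_rfl
  | succ k ih =>
    by_cases hz : z ∈ D
    · simp only [stoppedMean_of_mem hz, le_refl]
    · simp only [stoppedMean_succ_of_notMem hz, stepMean, ← sum_sub_distrib, ← mul_sub]
      refine (abs_sum_le_sum_abs _ _).trans (sum_le_sum fun v _ => ?_)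
      rw [abs_mul, abs_of_nonneg (hp v)]
      exact mul_le_mul_of_nonneg_left (ih _) (hp v)

lemma stoppedMean_mono_on (hp : ∀ v, 0 ≤ p v) {R : Set α} (hR : StoppedInvariant S step D R)
    {h' : α → ℝ} (hle : ∀ x ∈ R, h x ≤ h' x) (k : ℕ) :
    ∀ z ∈ R, stoppedMean S p step D h k z ≤ stoppedMean S p step D h' k z := by
  induction k with
  | zero => exact hle
  | succ k ih =>
    intro z hzR
    by_cases hz : z ∈ D
    · simp only [stoppedMean_of_mem hz]; exact hle z hzR
    · simp only [stoppedMean_succ_of_notMem hz, stepMean]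
      exact sum_le_sum fun v hv =>
        mul_le_mul_of_nonneg_left (ih _ (hR z hzR hz v hv)) (hp v)

lemma stoppedMean_eq_of_harmonic {R : Set α} (hR : StoppedInvariant S step D R)
    (hh : ∀ z ∈ R, z ∉ D → stepMean S p step h z = h z) (k : ℕ) :
    ∀ z ∈ R, stoppedMean S p step D h k z = h z := by
  induction k with
  | zero => exact fun _ _ => rfl
  | succ k ih =>
    intro z hzR
    by_cases hz : z ∈ D
    · exact stoppedMean_of_mem hz _
    · rw [stoppedMean_succ_of_notMem hz, ← hh z hzR hz]
      exact sum_congr rfl fun v hv => by rw [ih _ (hR z hzR hz v hv)]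

lemma stoppedMean_add_steps (a m : ℕ) (z : α) :
    stoppedMean S p step D h (a + m) z
      = stoppedMean S p step D (stoppedMean S p step D h m) a z := by
  induction a generalizing z with
  | zero => rw [zero_add]; rfl
  | succ a ih =>
    by_cases hz : z ∈ D
    · simp only [stoppedMean_of_mem hz]
    · rw [Nat.succ_add, stoppedMean_succ_of_notMem hz, stoppedMean_succ_of_notMem hz]
      simp only [stepMean, ih]

end StoppedChain

section Escape

variable {α β : Type*} {S : Finset β} {p : β → ℝ} {step : α → β → α} {D R : Set α}

lemma antitone_stoppedMean_indicator_compl (hp : ∀ v, 0 ≤ p v) (hS : ∑ v ∈ S, p v = 1)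
    (z : α) : Antitone fun k => stoppedMean S p step D (Dᶜ.indicator 1) k z := by
  refine antitone_nat_of_succ_le fun k => ?_
  rw [stoppedMean_add_steps]
  refine stoppedMean_mono_on hp (R := Set.univ) (fun _ _ _ _ _ => trivial) (fun x _ => ?_) k z
    trivial
  by_cases hx : x ∈ D
  · rw [stoppedMean_of_mem hx]
  · rw [stoppedMean_succ_of_notMem hx, Set.indicator_of_mem (Set.mem_compl hx)]
    exact stepMean_le_one hp hS (Set.indicator_le_self' fun _ _ => zero_le_one) x

lemma stoppedMean_indicator_compl_le_pow (hp : ∀ v, 0 ≤ p v) (hS : ∑ v ∈ S, p v = 1)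
    (hR : StoppedInvariant S step D R) {m : ℕ} {q : ℝ}
    (hq : ∀ z ∈ R, stoppedMean S p step D (Dᶜ.indicator 1) m z ≤ q) (j : ℕ) :
    ∀ z ∈ R, stoppedMean S p step D (Dᶜ.indicator 1) (j * m) z ≤ q ^ j := by
  induction j with
  | zero =>
    intro z _
    rw [zero_mul, pow_zero]
    exact Set.indicator_le_self' (fun _ _ => zero_le_one) z
  | succ j ih =>
    intro z hz
    have hq0 : 0 ≤ q :=
      (stoppedMean_nonneg hp (Set.indicator_nonneg fun _ _ => zero_le_one) _ _).trans (hq z hz)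
    have hle : ∀ x ∈ R, stoppedMean S p step D (Dᶜ.indicator 1) m x
        ≤ 0 + q * (Dᶜ.indicator 1) x := by
      intro x hx
      by_cases hxD : x ∈ D
      · simp [stoppedMean_of_mem hxD, hxD]
      · simpa [hxD] using hq x hx
    calc stoppedMean S p step D (Dᶜ.indicator 1) ((j + 1) * m) z
        = stoppedMean S p step D (stoppedMean S p step D (Dᶜ.indicator 1) m) (j * m) z := by
          rw [Nat.succ_mul, stoppedMean_add_steps]
      _ ≤ stoppedMean S p step D (fun x => 0 + q * (Dᶜ.indicator 1) x) (j * m) z :=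
          stoppedMean_mono_on hp hR hle _ z hz
      _ = q * stoppedMean S p step D (Dᶜ.indicator 1) (j * m) z := by
          rw [stoppedMean_affine hS, zero_add]
      _ ≤ q ^ (j + 1) := by
          rw [pow_succ']; exact mul_le_mul_of_nonneg_left (ih z hz) hq0

lemma tendsto_stoppedMean_indicator_compl (hp : ∀ v, 0 ≤ p v) (hS : ∑ v ∈ S, p v = 1)
    (hR : StoppedInvariant S step D R) {m : ℕ} (hm : m ≠ 0) {q : ℝ} (hq1 : q < 1)
    (hq : ∀ z ∈ R, stoppedMean S p step D (Dᶜ.indicator 1) m z ≤ q) {z : α} (hz : z ∈ R) :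
    Tendsto (fun k => stoppedMean S p step D (Dᶜ.indicator 1) k z) atTop (𝓝 0) := by
  have hnonneg : ∀ k x, 0 ≤ stoppedMean S p step D (Dᶜ.indicator 1) k x :=
    stoppedMean_nonneg hp (Set.indicator_nonneg fun _ _ => zero_le_one)
  have hpow : Tendsto (fun k => q ^ (k / m)) atTop (𝓝 0) :=
    (tendsto_pow_atTop_nhds_zero_of_lt_one ((hnonneg m z).trans (hq z hz)) hq1).comp
      (Nat.tendsto_div_const_atTop hm)
  refine squeeze_zero (fun k => hnonneg k z) (fun k => ?_) hpow
  exact (antitone_stoppedMean_indicator_compl hp hS z (Nat.div_mul_le_self k m)).trans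
    (stoppedMean_indicator_compl_le_pow hp hS hR hq (k / m) z hz)

lemma stoppedMean_indicator_compl_le_one_sub_pow (hp : ∀ v, 0 ≤ p v) (hS : ∑ v ∈ S, p v = 1)
    (hR : StoppedInvariant S step D R) (f : α → ℕ) {v₀ : β} (hv₀ : v₀ ∈ S)
    (hf₀ : ∀ z ∈ R, f z = 0 → z ∈ D) (hf : ∀ z ∈ R, z ∉ D → f (step z v₀) + 1 = f z)
    (k : ℕ) :
    ∀ z ∈ R, f z ≤ k → stoppedMean S p step D (Dᶜ.indicator 1) k z ≤ 1 - p v₀ ^ f z := by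
  have hp₀ : p v₀ ≤ 1 := hS ▸ single_le_sum (fun v _ => hp v) hv₀
  induction k with
  | zero =>
    intro z hzR hfz
    have hzD := hf₀ z hzR (Nat.le_zero.mp hfz)
    simp [stoppedMean_of_mem hzD, hzD, Nat.le_zero.mp hfz]
  | succ k ih =>
    intro z hzR hfz
    by_cases hzD : z ∈ D
    · simpa [stoppedMean_of_mem hzD, hzD] using pow_le_one₀ (hp v₀) hp₀
    · classical
      have hle : ∀ k x, stoppedMean S p step D (Dᶜ.indicator 1) k x ≤ 1 :=
        stoppedMean_le_one hp hS (Set.indicator_le_self' fun _ _ => zero_le_one)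
      rw [stoppedMean_succ_of_notMem hzD, stepMean, ← add_sum_erase S _ hv₀, ← hf z hzR hzD]
      calc p v₀ * stoppedMean S p step D (Dᶜ.indicator 1) k (step z v₀)
            + ∑ v ∈ S.erase v₀, p v * stoppedMean S p step D (Dᶜ.indicator 1) k (step z v)
          ≤ p v₀ * (1 - p v₀ ^ f (step z v₀)) + ∑ v ∈ S.erase v₀, p v * 1 :=
            add_le_add (mul_le_mul_of_nonneg_left
                (ih _ (hR z hzR hzD v₀ hv₀) (by linarith [hf z hzR hzD])) (hp v₀))
              (sum_le_sum fun v _ => mul_le_mul_of_nonneg_left (hle k _) (hp v))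
        _ = 1 - p v₀ ^ (f (step z v₀) + 1) := by
            have hrest : ∑ v ∈ S.erase v₀, p v = 1 - p v₀ := by
              rw [← hS, ← add_sum_erase S p hv₀, add_sub_cancel_left]
            simp only [mul_one, hrest]
            ring

end Escape

section Paths

variable {α β : Type*} (step : α → β → α) (D : Set α)

def path (z : α) (w : ℕ → β) : ℕ → α
  | 0 => z
  | k + 1 => step (path z w k) (w k)

open Classical in
noncomputable def stoppedPath : α → (ℕ → β) → ℕ → α
  | z, _, 0 => z
  | z, w, k + 1 => if z ∈ D then z else stoppedPath (step z (w 0)) (fun j => w (j + 1)) k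

variable {step D}

lemma path_succ' (z : α) (w : ℕ → β) (k : ℕ) :
    path step z w (k + 1) = path step (step z (w 0)) (fun j => w (j + 1)) k := by
  induction k with
  | zero => rfl
  | succ k ih => rw [path, ih, path]

lemma stoppedPath_of_mem {z : α} (hz : z ∈ D) (w : ℕ → β) (k : ℕ) :
    stoppedPath step D z w k = z := by
  cases k <;> simp [stoppedPath, hz]

lemma stoppedPath_succ_of_notMem {z : α} (hz : z ∉ D) (w : ℕ → β) (k : ℕ) :
    stoppedPath step D z w (k + 1)
      = stoppedPath step D (step z (w 0)) (fun j => w (j + 1)) k := by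
  simp [stoppedPath, hz]

lemma stoppedPath_mem_iff {Q : Set α} (hQD : Q ⊆ D) (k : ℕ) (z : α) (w : ℕ → β) :
    stoppedPath step D z w k ∈ Q ↔
      ∃ j ≤ k, path step z w j ∈ Q ∧ ∀ i < j, path step z w i ∉ D := by
  induction k generalizing z w with
  | zero => simp [stoppedPath, path]
  | succ k ih =>
    by_cases hz : z ∈ D
    · rw [stoppedPath_of_mem hz]
      constructor
      · exact fun hzQ => ⟨0, k.zero_le.trans k.le_succ, hzQ, fun i hi => absurd hi i.not_lt_zero⟩
      · rintro ⟨_ | j, -, hj, hpre⟩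
        · exact hj
        · exact absurd hz (hpre 0 j.succ_pos)
    · rw [stoppedPath_succ_of_notMem hz, ih]
      constructor
      · rintro ⟨j, hjk, hj, hpre⟩
        refine ⟨j + 1, Nat.succ_le_succ hjk, by rwa [path_succ'], fun i hi => ?_⟩
        cases i with
        | zero => exact hz
        | succ i => rw [path_succ']; exact hpre i (Nat.succ_lt_succ_iff.mp hi)
      · rintro ⟨_ | j, hjk, hj, hpre⟩
        · exact absurd (hQD hj) hz
        · refine ⟨j, Nat.succ_le_succ_iff.mp hjk, by rwa [← path_succ'], fun i hi => ?_⟩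
          rw [← path_succ']
          exact hpre (i + 1) (Nat.succ_lt_succ hi)

end Paths

section Cylinders

variable {Ω α β : Type*} {I : ℕ → Ω → β} {S : Finset β} {p : β → ℝ} {step : α → β → α}
  {D : Set α}

def cylinder (I : ℕ → Ω → β) (m : ℕ) (u : ℕ → β) : Set Ω := {ω | ∀ j < m, I j ω = u j}

lemma cylinder_succ_update (m : ℕ) (u : ℕ → β) (v : β) :
    cylinder I (m + 1) (Function.update u m v) = cylinder I m u ∩ {ω | I m ω = v} := by
  ext ω
  simp only [cylinder, Set.mem_ofPred_eq, Set.mem_inter_iff, Nat.forall_lt_succ_right,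
    Function.update_self]
  refine and_congr_left' (forall₂_congr fun j hj => ?_)
  rw [Function.update_of_ne hj.ne]

lemma stoppedPath_mem_eq_biUnion (hvals : ∀ k ω, I k ω ∈ S) {z : α} (hz : z ∉ D) (Q : Set α)
    (m k : ℕ) :
    {ω | stoppedPath step D z (fun j => I (m + j) ω) (k + 1) ∈ Q}
      = ⋃ v ∈ S, {ω | I m ω = v}
          ∩ {ω | stoppedPath step D (step z v) (fun j => I (m + 1 + j) ω) k ∈ Q} := by
  ext ω
  simp only [stoppedPath_succ_of_notMem hz, Set.mem_ofPred_eq, Set.mem_iUnion,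
    Set.mem_inter_iff, exists_prop, add_zero, Nat.add_right_comm m 1, ← add_assoc]
  exact ⟨fun h => ⟨_, hvals m ω, rfl, h⟩, fun ⟨_, _, hv, h⟩ => hv ▸ h⟩

variable [MeasurableSpace Ω] {P : Measure Ω}

lemma measure_cylinder_succ_update (hp : ∀ v, 0 ≤ p v)
    (hcyl : ∀ m u, P (cylinder I m u) = ENNReal.ofReal (∏ j ∈ range m, p (u j)))
    (m : ℕ) (u : ℕ → β) (v : β) :
    P (cylinder I (m + 1) (Function.update u m v))
      = P (cylinder I m u) * ENNReal.ofReal (p v) := by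
  rw [hcyl, hcyl, prod_range_succ, Function.update_self,
    ENNReal.ofReal_mul (prod_nonneg fun j _ => hp _)]
  congr 2
  exact prod_congr rfl fun j hj => by rw [Function.update_of_ne (mem_range.mp hj).ne]

variable [MeasurableSpace β] [MeasurableSingletonClass β]

lemma measurableSet_cylinder (hmeas : ∀ k, Measurable (I k)) (m : ℕ) (u : ℕ → β) :
    MeasurableSet (cylinder I m u) := by
  have : cylinder I m u = ⋂ j ∈ range m, I j ⁻¹' {u j} := by ext; simp [cylinder]
  rw [this]
  exact Finset.measurableSet_biInter _ fun j _ => hmeas j (measurableSet_singleton _)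

lemma measurableSet_stoppedPath_mem (hmeas : ∀ k, Measurable (I k)) (hvals : ∀ k ω, I k ω ∈ S)
    (Q : Set α) (k : ℕ) :
    ∀ m z, MeasurableSet {ω | stoppedPath step D z (fun j => I (m + j) ω) k ∈ Q} := by
  induction k with
  | zero => exact fun m z => MeasurableSet.const (z ∈ Q)
  | succ k ih =>
    intro m z
    by_cases hz : z ∈ D
    · simp only [stoppedPath_of_mem hz]; exact MeasurableSet.const _
    · rw [stoppedPath_mem_eq_biUnion hvals hz]
      exact Finset.measurableSet_biUnion _ fun v _ =>
        (hmeas m (measurableSet_singleton v)).inter (ih _ _)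

lemma measure_cylinder_inter_stoppedPath_mem (hp : ∀ v, 0 ≤ p v)
    (hmeas : ∀ k, Measurable (I k)) (hvals : ∀ k ω, I k ω ∈ S)
    (hcyl : ∀ m u, P (cylinder I m u) = ENNReal.ofReal (∏ j ∈ range m, p (u j)))
    (Q : Set α) (k : ℕ) :
    ∀ m u z, P (cylinder I m u ∩ {ω | stoppedPath step D z (fun j => I (m + j) ω) k ∈ Q})
      = P (cylinder I m u) * ENNReal.ofReal (stoppedMean S p step D (Q.indicator 1) k z) := by
  have hconst : ∀ m u z, P (cylinder I m u ∩ {_ω | z ∈ Q})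
      = P (cylinder I m u) * ENNReal.ofReal (Q.indicator 1 z) := by
    intro m u z
    by_cases hzQ : z ∈ Q <;> simp [hzQ]
  induction k with
  | zero => exact hconst
  | succ k ih =>
    intro m u z
    by_cases hz : z ∈ D
    · simp only [stoppedPath_of_mem hz, stoppedMean_of_mem hz]; exact hconst m u z
    · have hnonneg : ∀ x, 0 ≤ stoppedMean S p step D (Q.indicator 1) k x :=
        stoppedMean_nonneg hp (Set.indicator_nonneg fun _ _ => zero_le_one) k
      rw [stoppedPath_mem_eq_biUnion hvals hz, Set.inter_iUnion₂,
        measure_biUnion_finset, stoppedMean_succ_of_notMem hz, stepMean,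
        ENNReal.ofReal_sum_of_nonneg fun v _ => mul_nonneg (hp v) (hnonneg _), mul_sum]
      · refine sum_congr rfl fun v _ => ?_
        rw [← Set.inter_assoc, ← cylinder_succ_update, ih, measure_cylinder_succ_update hp hcyl,
          ENNReal.ofReal_mul (hp v), mul_assoc]
      · intro v _ v' _ hvv'
        exact Set.disjoint_left.mpr fun ω h h' => hvv' (h.2.1.symm.trans h'.2.1)
      · exact fun v _ => (measurableSet_cylinder hmeas m u).inter
          ((hmeas m (measurableSet_singleton v)).inter
            (measurableSet_stoppedPath_mem hmeas hvals Q k _ _))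

lemma measure_stoppedPath_mem [Nonempty β] (hp : ∀ v, 0 ≤ p v)
    (hmeas : ∀ k, Measurable (I k)) (hvals : ∀ k ω, I k ω ∈ S)
    (hcyl : ∀ m u, P (cylinder I m u) = ENNReal.ofReal (∏ j ∈ range m, p (u j)))
    (Q : Set α) (k : ℕ) (z : α) :
    P {ω | stoppedPath step D z (fun j => I j ω) k ∈ Q}
      = ENNReal.ofReal (stoppedMean S p step D (Q.indicator 1) k z) := by
  let u : ℕ → β := fun _ => Classical.arbitrary β
  have hcyl₀ : cylinder I 0 u = Set.univ := by simp [cylinder]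
  have := measure_cylinder_inter_stoppedPath_mem (step := step) (D := D) hp hmeas hvals hcyl
    Q k 0 u z
  rw [hcyl 0 u, prod_range_zero, ENNReal.ofReal_one, one_mul, hcyl₀, Set.univ_inter] at this
  simpa only [zero_add] using this

end Cylinders

section Walk

def incr : Finset (ℤ × ℤ) := {(-1, 0), (1, 1), (0, -1)}

def walkStep (z v : ℤ × ℤ) : ℤ × ℤ := z + if 0 ≤ (z + v).2 then v else 0

lemma sum_incr (f : ℤ × ℤ → ℝ) : ∑ v ∈ incr, f v = f (-1, 0) + f (1, 1) + f (0, -1) := by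
  rw [incr, sum_insert (by decide), sum_insert (by decide), sum_singleton, add_assoc]

variable {lam mu1 mu2 : ℝ}

lemma incProb_nonneg (hlam : 0 ≤ lam) (h1 : 0 ≤ mu1) (h2 : 0 ≤ mu2) (v : ℤ × ℤ) :
    0 ≤ incProb lam mu1 mu2 v := by
  unfold incProb; split_ifs <;> first | assumption | exact le_rfl

lemma sum_incr_incProb (hsum : lam + mu1 + mu2 = 1) :
    ∑ v ∈ incr, incProb lam mu1 mu2 v = 1 := by
  simp [sum_incr, incProb, hsum]

/-- The only value making `hitFn` harmonic at the reflecting boundary `z.2 = 0` too. -/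
noncomputable def boundaryCoeff (lam mu1 mu2 : ℝ) : ℝ := (mu2 - lam) / (mu2 - mu1)

noncomputable def hitFn (lam mu1 mu2 : ℝ) (z : ℤ × ℤ) : ℝ :=
  (lam / mu2) ^ (z.1 - z.2)
    + boundaryCoeff lam mu1 mu2 * (lam / mu1) ^ (z.1 - z.2) * (lam / mu1) ^ z.2
    - boundaryCoeff lam mu1 mu2 * (lam / mu2) ^ (z.1 - z.2) * (lam / mu1) ^ z.2

lemma walkStep_of_nonneg {z v : ℤ × ℤ} (h : 0 ≤ (z + v).2) : walkStep z v = z + v := by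
  rw [walkStep, if_pos h]

lemma walkStep_of_neg {z v : ℤ × ℤ} (h : (z + v).2 < 0) : walkStep z v = z := by
  rw [walkStep, if_neg h.not_ge, add_zero]

lemma stepMean_hitFn (hlam : lam ≠ 0) (hmu1 : mu1 ≠ 0) (hmu2 : mu2 ≠ 0) (hne : mu1 ≠ mu2)
    (hsum : lam + mu1 + mu2 = 1) {z : ℤ × ℤ} (hz : 0 ≤ z.2) :
    stepMean incr (incProb lam mu1 mu2) walkStep (hitFn lam mu1 mu2) z
      = hitFn lam mu1 mu2 z := by
  have hc : boundaryCoeff lam mu1 mu2 * (mu2 - mu1) = mu2 - lam :=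
    div_mul_cancel₀ _ (sub_ne_zero.mpr hne.symm)
  have hρ₁ : lam / mu1 ≠ 0 := div_ne_zero hlam hmu1
  have hρ₂ : lam / mu2 ≠ 0 := div_ne_zero hlam hmu2
  obtain ⟨x, y⟩ := z
  simp only at hz
  have hinc : incProb lam mu1 mu2 (-1, 0) = lam ∧ incProb lam mu1 mu2 (1, 1) = mu1
      ∧ incProb lam mu1 mu2 (0, -1) = mu2 := by simp [incProb]
  rw [stepMean, sum_incr, hinc.1, hinc.2.1, hinc.2.2, walkStep_of_nonneg (by simpa using hz),
    walkStep_of_nonneg (by simp; omega)]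
  rcases hz.eq_or_lt with rfl | hy
  · rw [walkStep_of_neg (by simp)]
    simp only [hitFn, Prod.mk_add_mk, add_zero, zero_add, sub_zero, add_sub_cancel_right,
      zpow_zero, zpow_one, mul_one]
    rw [show x + -1 = x - 1 by ring]
    simp only [zpow_sub_one₀ hρ₁, zpow_sub_one₀ hρ₂]
    set c := boundaryCoeff lam mu1 mu2
    generalize (lam / mu2) ^ x = X, (lam / mu1) ^ x = Y
    field_simp
    linear_combination (X - c * X + c * Y) * hsum - X * hc
  · rw [walkStep_of_nonneg (by simp; omega)]
    simp only [hitFn, Prod.mk_add_mk, add_zero]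
    rw [show x + -1 - y = x - y - 1 by ring, show x + 1 - (y + 1) = x - y by ring,
      show x - (y + -1) = x - y + 1 by ring, show y + -1 = y - 1 by ring]
    simp only [zpow_sub_one₀ hρ₁, zpow_sub_one₀ hρ₂, zpow_add_one₀ hρ₁, zpow_add_one₀ hρ₂]
    set c := boundaryCoeff lam mu1 mu2
    generalize (lam / mu2) ^ (x - y) = X, (lam / mu1) ^ (x - y) = Y, (lam / mu1) ^ y = Z
    field_simp
    linear_combination (X + c * Y * Z - c * X * Z) * hsum

lemma abs_hitFn_le (hlam : 0 < lam) (h1 : lam < mu1) (h2 : lam < mu2) {z : ℤ × ℤ}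
    (ha : 0 ≤ z.1 - z.2) (hb : 0 ≤ z.2) :
    |hitFn lam mu1 mu2 z|
      ≤ (1 + 2 * |boundaryCoeff lam mu1 mu2|) * max (lam / mu1) (lam / mu2) ^ (z.1 - z.2) := by
  have hρ₁ : 0 < lam / mu1 := div_pos hlam (hlam.trans h1)
  have hρ₂ : 0 < lam / mu2 := div_pos hlam (hlam.trans h2)
  have hX : (lam / mu2) ^ (z.1 - z.2) ≤ max (lam / mu1) (lam / mu2) ^ (z.1 - z.2) :=
    zpow_le_zpow_left₀ ha hρ₂.le (le_max_right _ _)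
  have hY : (lam / mu1) ^ (z.1 - z.2) ≤ max (lam / mu1) (lam / mu2) ^ (z.1 - z.2) :=
    zpow_le_zpow_left₀ ha hρ₁.le (le_max_left _ _)
  have hZ : (lam / mu1) ^ z.2 ≤ 1 :=
    zpow_le_one₀ hρ₁ ((div_le_one (hlam.trans h1)).mpr h1.le) hb
  have hX0 := zpow_pos hρ₂ (z.1 - z.2)
  have hY0 := zpow_pos hρ₁ (z.1 - z.2)
  have hZ0 := zpow_pos hρ₁ z.2
  unfold hitFn
  set c := boundaryCoeff lam mu1 mu2
  generalize (lam / mu2) ^ (z.1 - z.2) = X at *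
  generalize (lam / mu1) ^ (z.1 - z.2) = Y at *
  generalize (lam / mu1) ^ z.2 = Z at *
  generalize max (lam / mu1) (lam / mu2) ^ (z.1 - z.2) = M at *
  have hYZ : Y * Z ≤ M := (mul_le_of_le_one_right hY0.le hZ).trans hY
  have hXZ : X * Z ≤ M := (mul_le_of_le_one_right hX0.le hZ).trans hX
  calc |X + c * Y * Z - c * X * Z| ≤ |X| + |c * Y * Z| + |c * X * Z| :=
        (abs_sub _ _).trans (add_le_add_left (abs_add_le _ _) _)
    _ = X + |c| * (Y * Z) + |c| * (X * Z) := by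
        simp only [mul_assoc, abs_mul, abs_of_pos hX0, abs_of_pos (mul_pos hY0 hZ0),
          abs_of_pos (mul_pos hX0 hZ0)]
    _ ≤ M + |c| * M + |c| * M := by gcongr
    _ = (1 + 2 * |c|) * M := by ring

def diag : Set (ℤ × ℤ) := {z | z.1 = z.2}

def stopSet (n : ℕ) : Set (ℤ × ℤ) := {z | z.1 = z.2 ∨ (n : ℤ) ≤ z.1 - z.2}

def strip (n : ℕ) : Set (ℤ × ℤ) := {z | 0 ≤ z.2 ∧ 0 ≤ z.1 - z.2 ∧ z.1 - z.2 ≤ n}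

lemma diag_subset_stopSet (n : ℕ) : diag ⊆ stopSet n := fun _ => Or.inl

lemma stopSet_antitone : Antitone stopSet := fun n n' hn z hz =>
  hz.imp_right fun h => le_trans (by exact_mod_cast hn) h

lemma stoppedInvariant_strip (n : ℕ) :
    StoppedInvariant incr walkStep (stopSet n) (strip n) := by
  rintro ⟨x, y⟩ ⟨hy, ha, han⟩ hD v hv
  simp only [stopSet, Set.mem_ofPred_eq, not_or] at hD
  simp only [incr, mem_insert, mem_singleton] at hv
  rcases hv with rfl | rfl | rfl
  · rw [walkStep_of_nonneg (by simpa using hy)]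
    simp only [strip, Prod.mk_add_mk, Set.mem_ofPred_eq]; omega
  · rw [walkStep_of_nonneg (by simp; omega)]
    simp only [strip, Prod.mk_add_mk, Set.mem_ofPred_eq]; omega
  · rcases hy.eq_or_lt with rfl | hy
    · rw [walkStep_of_neg (by simp)]; exact ⟨le_rfl, ha, han⟩
    · rw [walkStep_of_nonneg (by simp; omega)]
      simp only [strip, Prod.mk_add_mk, Set.mem_ofPred_eq]; omega

lemma hitFn_of_mem_diag {z : ℤ × ℤ} (hz : z ∈ diag) : hitFn lam mu1 mu2 z = 1 := by
  simp [hitFn, show z.1 - z.2 = 0 from sub_eq_zero.mpr hz]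

lemma abs_hitFn_sub_indicator_diag_le (hlam : 0 < lam) (h1 : lam < mu1) (h2 : lam < mu2)
    {n : ℕ} {z : ℤ × ℤ} (hz : z ∈ strip n) :
    |hitFn lam mu1 mu2 z - diag.indicator 1 z|
      ≤ (1 + 2 * |boundaryCoeff lam mu1 mu2|) * max (lam / mu1) (lam / mu2) ^ n
        + (1 + 2 * |boundaryCoeff lam mu1 mu2|) * (stopSet n)ᶜ.indicator 1 z := by
  obtain ⟨hb, ha, han⟩ := hz
  have hr : 0 < max (lam / mu1) (lam / mu2) := lt_max_of_lt_left (div_pos hlam (hlam.trans h1))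
  have hr1 : max (lam / mu1) (lam / mu2) ≤ 1 :=
    max_le ((div_le_one (hlam.trans h1)).mpr h1.le) ((div_le_one (hlam.trans h2)).mpr h2.le)
  have hB : 0 ≤ 1 + 2 * |boundaryCoeff lam mu1 mu2| := by positivity
  have hbound := abs_hitFn_le hlam h1 h2 ha hb
  by_cases hdiag : z ∈ diag
  · rw [hitFn_of_mem_diag hdiag, Set.indicator_of_mem hdiag, Pi.one_apply, sub_self, abs_zero]
    exact add_nonneg (by positivity)
      (mul_nonneg hB (Set.indicator_nonneg (fun _ _ => zero_le_one) _))
  rw [Set.indicator_of_notMem hdiag, sub_zero]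
  by_cases hstop : z ∈ stopSet n
  · rw [Set.indicator_of_notMem (Set.notMem_compl_iff.mpr hstop), mul_zero, add_zero]
    have hn : z.1 - z.2 = n := le_antisymm han (hstop.resolve_left hdiag)
    rwa [hn, zpow_natCast] at hbound
  · rw [Set.indicator_of_mem (Set.mem_compl hstop), Pi.one_apply, mul_one]
    refine hbound.trans (le_add_of_nonneg_of_le (by positivity) ?_)
    exact mul_le_of_le_one_right hB (zpow_le_one₀ hr hr1 ha)

lemma stoppedMean_compl_stopSet_le (hlam : 0 < lam) (h1 : lam < mu1) (h2 : lam < mu2)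
    (hsum : lam + mu1 + mu2 = 1) (n : ℕ) :
    ∀ z ∈ strip n, stoppedMean incr (incProb lam mu1 mu2) walkStep (stopSet n)
      ((stopSet n)ᶜ.indicator 1) n z ≤ 1 - lam ^ n := by
  intro z hz
  have hf₀ : ∀ z ∈ strip n, (z.1 - z.2).toNat = 0 → z ∈ stopSet n := fun z hz h0 =>
    Or.inl (by have := hz.2.1; omega)
  have hf : ∀ z ∈ strip n, z ∉ stopSet n →
      ((walkStep z (-1, 0)).1 - (walkStep z (-1, 0)).2).toNat + 1 = (z.1 - z.2).toNat := by
    rintro ⟨x, y⟩ ⟨hy, ha, -⟩ hD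
    simp only [stopSet, Set.mem_ofPred_eq, not_or] at hD
    rw [walkStep_of_nonneg (by simpa using hy)]
    simp only [Prod.mk_add_mk]
    omega
  have hlam1 : lam ≤ 1 := by linarith [hlam.trans h1, hlam.trans h2]
  -- from the strip, `n` steps `(-1, 0)` lead to the diagonal
  calc _ ≤ 1 - incProb lam mu1 mu2 (-1, 0) ^ (z.1 - z.2).toNat :=
        stoppedMean_indicator_compl_le_one_sub_pow
          (incProb_nonneg hlam.le (hlam.trans h1).le (hlam.trans h2).le)
          (sum_incr_incProb hsum) (stoppedInvariant_strip n) (fun z => (z.1 - z.2).toNat)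
          (by simp [incr]) hf₀ hf n z hz (by have := hz.2.2; omega)
    _ ≤ 1 - lam ^ n := by
        rw [show incProb lam mu1 mu2 (-1, 0) = lam by simp [incProb]]
        exact sub_le_sub_left
          (pow_le_pow_of_le_one hlam.le hlam1 (by have := hz.2.2; omega)) 1

lemma abs_hitFn_sub_stoppedMean_le (hlam : 0 < lam) (h1 : lam < mu1) (h2 : lam < mu2)
    (hne : mu1 ≠ mu2) (hsum : lam + mu1 + mu2 = 1) {n : ℕ} {y : ℤ × ℤ} (hy : y ∈ strip n)
    (k : ℕ) :
    |hitFn lam mu1 mu2 y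
        - stoppedMean incr (incProb lam mu1 mu2) walkStep (stopSet n) (diag.indicator 1) k y|
      ≤ (1 + 2 * |boundaryCoeff lam mu1 mu2|) * max (lam / mu1) (lam / mu2) ^ n
        + (1 + 2 * |boundaryCoeff lam mu1 mu2|) * stoppedMean incr (incProb lam mu1 mu2)
            walkStep (stopSet n) ((stopSet n)ᶜ.indicator 1) k y := by
  have hp := incProb_nonneg hlam.le (hlam.trans h1).le (hlam.trans h2).le
  have hharm : stoppedMean incr (incProb lam mu1 mu2) walkStep (stopSet n)
      (hitFn lam mu1 mu2) k y = hitFn lam mu1 mu2 y :=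
    stoppedMean_eq_of_harmonic (stoppedInvariant_strip n)
      (fun z hz _ => stepMean_hitFn hlam.ne' (hlam.trans h1).ne' (hlam.trans h2).ne' hne hsum
        hz.1) k y hy
  rw [← hharm, ← stoppedMean_affine (sum_incr_incProb hsum)]
  exact (abs_stoppedMean_sub_le hp _ k y).trans
    (stoppedMean_mono_on hp (stoppedInvariant_strip n)
      (fun z hz => abs_hitFn_sub_indicator_diag_le hlam h1 h2 hz) k y hy)

lemma abs_hitFn_sub_le_of_tendsto (hlam : 0 < lam) (h1 : lam < mu1) (h2 : lam < mu2)
    (hne : mu1 ≠ mu2) (hsum : lam + mu1 + mu2 = 1) {n : ℕ} (hn : n ≠ 0) {y : ℤ × ℤ}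
    (hy : y ∈ strip n) {L : ℝ}
    (hL : Tendsto (fun k => stoppedMean incr (incProb lam mu1 mu2) walkStep (stopSet n)
      (diag.indicator 1) k y) atTop (𝓝 L)) :
    |hitFn lam mu1 mu2 y - L|
      ≤ (1 + 2 * |boundaryCoeff lam mu1 mu2|) * max (lam / mu1) (lam / mu2) ^ n := by
  have hescape := tendsto_stoppedMean_indicator_compl
    (incProb_nonneg hlam.le (hlam.trans h1).le (hlam.trans h2).le) (sum_incr_incProb hsum)
    (stoppedInvariant_strip n) hn (sub_lt_self 1 (pow_pos hlam n))
    (stoppedMean_compl_stopSet_le hlam h1 h2 hsum n) hy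
  refine le_of_tendsto_of_tendsto' (tendsto_const_nhds.sub hL).abs ?_
    (abs_hitFn_sub_stoppedMean_le hlam h1 h2 hne hsum hy)
  simpa using tendsto_const_nhds.add (hescape.const_mul (1 + 2 * |boundaryCoeff lam mu1 mu2|))

lemma exists_path_mem_diag_iff (y : ℤ × ℤ) (w : ℕ → ℤ × ℤ) :
    (∃ k, path walkStep y w k ∈ diag)
      ↔ ∃ n k, stoppedPath walkStep (stopSet n) y w k ∈ diag := by
  classical
  constructor
  -- stop at a level above the path up to its first visit to the diagonal
  · intro hex
    set a : ℕ → ℤ := fun i => (path walkStep y w i).1 - (path walkStep y w i).2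
    obtain ⟨M, hM⟩ := ((range (Nat.find hex)).image a).bddAbove
    refine ⟨M.toNat + 1, Nat.find hex, ?_⟩
    rw [stoppedPath_mem_iff (diag_subset_stopSet _)]
    refine ⟨_, le_rfl, Nat.find_spec hex,
      fun i hi hD => hD.elim (Nat.find_min hex hi) fun h => ?_⟩
    have : a i ≤ M := hM (mem_coe.mpr (mem_image_of_mem a (mem_range.mpr hi)))
    simp only [a] at this
    omega
  · rintro ⟨n, k, h⟩
    obtain ⟨j, -, hj, -⟩ := (stoppedPath_mem_iff (diag_subset_stopSet n) k y w).mp h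
    exact ⟨j, hj⟩

end Walk

section Probability

variable {Ω : Type*} {I : ℕ → Ω → ℤ × ℤ}

def hitsDiagBefore (I : ℕ → Ω → ℤ × ℤ) (y : ℤ × ℤ) (n k : ℕ) : Set Ω :=
  {ω | stoppedPath walkStep (stopSet n) y (fun j => I j ω) k ∈ diag}

lemma hitsDiagBefore_mono {y : ℤ × ℤ} {n n' k k' : ℕ} (hn : n ≤ n') (hk : k ≤ k') :
    hitsDiagBefore I y n k ⊆ hitsDiagBefore I y n' k' := by
  intro ω h
  simp only [hitsDiagBefore, Set.mem_ofPred_eq, stoppedPath_mem_iff (diag_subset_stopSet _)]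
    at h ⊢
  obtain ⟨j, hj, hdiag, hpre⟩ := h
  exact ⟨j, hj.trans hk, hdiag, fun i hi hD => hpre i hi (stopSet_antitone hn hD)⟩

variable [MeasurableSpace Ω] {P : Measure Ω} {lam mu1 mu2 : ℝ}

lemma abs_hitFn_sub_measure_hitsDiagBefore_le [IsFiniteMeasure P] (hlam : 0 < lam)
    (h1 : lam < mu1) (h2 : lam < mu2) (hne : mu1 ≠ mu2) (hsum : lam + mu1 + mu2 = 1)
    (hmeas : ∀ k, Measurable (I k)) (hincr : ∀ k ω, I k ω ∈ incr)
    (hcyl : ∀ m u,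
      P (cylinder I m u) = ENNReal.ofReal (∏ j ∈ range m, incProb lam mu1 mu2 (u j)))
    {y : ℤ × ℤ} {n : ℕ} (hn : n ≠ 0) (hy : y ∈ strip n) :
    |hitFn lam mu1 mu2 y - (P (⋃ k, hitsDiagBefore I y n k)).toReal|
      ≤ (1 + 2 * |boundaryCoeff lam mu1 mu2|) * max (lam / mu1) (lam / mu2) ^ n := by
  have hp := incProb_nonneg hlam.le (hlam.trans h1).le (hlam.trans h2).le
  refine abs_hitFn_sub_le_of_tendsto hlam h1 h2 hne hsum hn hy (((ENNReal.tendsto_toReal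
    (measure_ne_top P _)).comp (tendsto_measure_iUnion_atTop fun k k' hk =>
      hitsDiagBefore_mono le_rfl hk)).congr fun k => ?_)
  rw [Function.comp_apply, Function.comp_apply, hitsDiagBefore,
    measure_stoppedPath_mem hp hmeas hincr hcyl]
  exact ENNReal.toReal_ofReal
    (stoppedMean_nonneg hp (Set.indicator_nonneg fun _ _ => zero_le_one) k y)

lemma measure_exists_path_mem_diag [IsFiniteMeasure P] (hlam : 0 < lam)
    (h1 : lam < mu1) (h2 : lam < mu2) (hne : mu1 ≠ mu2) (hsum : lam + mu1 + mu2 = 1)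
    (hmeas : ∀ k, Measurable (I k)) (hincr : ∀ k ω, I k ω ∈ incr)
    (hcyl : ∀ m u,
      P (cylinder I m u) = ENNReal.ofReal (∏ j ∈ range m, incProb lam mu1 mu2 (u j)))
    {y : ℤ × ℤ} (hy2 : 0 ≤ y.2) (hy12 : y.2 ≤ y.1) :
    P {ω | ∃ k, path walkStep y (fun j => I j ω) k ∈ diag}
      = ENNReal.ofReal (hitFn lam mu1 mu2 y) := by
  have hunion : {ω | ∃ k, path walkStep y (fun j => I j ω) k ∈ diag}
      = ⋃ n, ⋃ k, hitsDiagBefore I y n k := by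
    ext ω
    simpa [hitsDiagBefore] using exists_path_mem_diag_iff y (fun j => I j ω)
  have hmono : Monotone fun n => ⋃ k, hitsDiagBefore I y n k := fun _ _ hn =>
    Set.iUnion_mono fun _ => hitsDiagBefore_mono hn le_rfl
  have hr : Tendsto (fun n => (1 + 2 * |boundaryCoeff lam mu1 mu2|)
      * max (lam / mu1) (lam / mu2) ^ n) atTop (𝓝 0) := by
    have hρ : max (lam / mu1) (lam / mu2) < 1 :=
      max_lt ((div_lt_one (hlam.trans h1)).mpr h1) ((div_lt_one (hlam.trans h2)).mpr h2)
    simpa using (tendsto_pow_atTop_nhds_zero_of_lt_one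
      (le_max_of_le_left (div_pos hlam (hlam.trans h1)).le) hρ).const_mul
      (1 + 2 * |boundaryCoeff lam mu1 mu2|)
  have hlim : Tendsto (fun n => (P (⋃ k, hitsDiagBefore I y n k)).toReal) atTop
      (𝓝 (hitFn lam mu1 mu2 y)) := by
    rw [tendsto_iff_norm_sub_tendsto_zero]
    refine squeeze_zero' (Eventually.of_forall fun _ => norm_nonneg _)
      ((eventually_gt_atTop (y.1 - y.2).toNat).mono fun n hn => ?_) hr
    rw [Real.norm_eq_abs, abs_sub_comm]
    exact abs_hitFn_sub_measure_hitsDiagBefore_le hlam h1 h2 hne hsum hmeas hincr hcyl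
      (by omega) ⟨hy2, by omega, by omega⟩
  rw [hunion, ← ENNReal.ofReal_toReal (measure_ne_top P _), tendsto_nhds_unique
    ((ENNReal.tendsto_toReal (measure_ne_top P _)).comp (tendsto_measure_iUnion_atTop hmono))
    hlim]

end Probability

end HittingProbability

open HittingProbability

/-- the exact formula for the hitting probability of the diagonal:
P_y(τ < ∞) = ρ₂^(y(1)-y(2)) + ((μ₂-λ)/(μ₂-μ₁))ρ₁^(y(1)-y(2))ρ₁^(y(2))
  + ((μ₂-λ)/(μ₁-μ₂))ρ₂^(y(1)-y(2))ρ₁^(y(2)), ρᵢ = λ/μᵢ, for y ∈ ℤ×ℤ₊, y(1) ≥ y(2). -/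
theorem hitting_probability_formula
    {Ω : Type*} [MeasurableSpace Ω] (P : Measure Ω) [IsProbabilityMeasure P]
    (lam mu1 mu2 : ℝ) (hlam : 0 < lam) (h1 : lam < mu1) (h2 : lam < mu2)
    (hne : mu1 ≠ mu2) (hsum : lam + mu1 + mu2 = 1)
    (I : ℕ → Ω → ℤ × ℤ) (hmeas : ∀ k, Measurable (I k))
    (hvals : ∀ k ω, I k ω ∈ ({(-1, 0), (1, 1), (0, -1)} : Set (ℤ × ℤ)))
    (hiid : ∀ (k : ℕ) (w : ℕ → ℤ × ℤ),
      P {ω | ∀ j < k, I j ω = w j}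
        = ENNReal.ofReal (∏ j ∈ Finset.range k, incProb lam mu1 mu2 (w j)))
    (y : ℤ × ℤ) (hy2 : 0 ≤ y.2) (hy12 : y.2 ≤ y.1)
    (Y : ℕ → Ω → ℤ × ℤ) (hY0 : ∀ ω, Y 0 ω = y)
    (hYstep : ∀ k ω, Y (k + 1) ω
        = Y k ω + (if 0 ≤ (Y k ω + I k ω).2 then I k ω else 0)) :
    P {ω | ∃ k, (Y k ω).1 = (Y k ω).2}
      = ENNReal.ofReal
          ((lam / mu2) ^ (y.1 - y.2)
            + ((mu2 - lam) / (mu2 - mu1)) * (lam / mu1) ^ (y.1 - y.2) * (lam / mu1) ^ y.2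
            + ((mu2 - lam) / (mu1 - mu2)) * (lam / mu2) ^ (y.1 - y.2)
                * (lam / mu1) ^ y.2) := by
  have hincr : ∀ k ω, I k ω ∈ incr := fun k ω => by simpa [incr] using hvals k ω
  have hY : ∀ k ω, Y k ω = path walkStep y (fun j => I j ω) k := by
    intro k ω
    induction k with
    | zero => exact hY0 ω
    | succ k ih => rw [hYstep, ih]; rfl
  have hhit := measure_exists_path_mem_diag hlam h1 h2 hne hsum hmeas hincr hiid hy2 hy12
  simp only [diag, Set.mem_ofPred_eq, ← hY] at hhit
  rw [hhit, hitFn, boundaryCoeff, ← neg_sub mu2 mu1, div_neg]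
  congr 1
  ring
end

section
/- Let a,b > 0 with a ≠ b and define on B = {x ∈ ℝ×ℝ₊ : x(1) > x(2)} the function V(x) = e^{-3(a+2b)(x(1)-x(2))} + ((a+2b)/(a-b))·e^{-3(a+2b)(x(1)-x(2))}·e^{-3(2a+b)x(2)} - ((a+2b)/(a-b))·e^{-3(2a+b)x(1)}. Then V satisfies LV = 0 on B, where L f = (2a+b)∂₁f + (a-b)∂₂f + (1/6)(2f₁₁ + 2f₁₂ + 2f₂₂) (the Hessian of f contracted against the matrix [[2,1],[1,2]], scaled by 1/6), and V satisfies the Neumann condition ∂₂V(x) = 0 for x with x(2) = 0. -/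
/-- The candidate hitting-probability function for the constrained diffusion:
V(x₁,x₂) = e^{-3(a+2b)(x₁-x₂)} + ((a+2b)/(a-b))e^{-3(a+2b)(x₁-x₂)}e^{-3(2a+b)x₂}
          - ((a+2b)/(a-b))e^{-3(2a+b)x₁}. -/
noncomputable def Vdiff (a b : ℝ) (x₁ x₂ : ℝ) : ℝ :=
  Real.exp (-3 * (a + 2 * b) * (x₁ - x₂))
    + ((a + 2 * b) / (a - b)) * Real.exp (-3 * (a + 2 * b) * (x₁ - x₂))
        * Real.exp (-3 * (2 * a + b) * x₂)
    - ((a + 2 * b) / (a - b)) * Real.exp (-3 * (2 * a + b) * x₁)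

/-- exp of linear function of first variable. -/
lemma hExpA1 (k d x : ℝ) :
    HasDerivAt (fun s => Real.exp (k * (s - d))) (k * Real.exp (k * (x - d))) x := by
  have hl : HasDerivAt (fun s : ℝ => k * (s - d)) k x := by
    simpa using ((hasDerivAt_id x).sub_const d).const_mul k
  simpa [mul_comm] using hl.exp

/-- exp of linear function (second variable of x₁ - t form). -/
lemma hExpA2 (k d x : ℝ) :
    HasDerivAt (fun t => Real.exp (k * (d - t))) (-k * Real.exp (k * (d - x))) x := by
  have hl : HasDerivAt (fun t : ℝ => k * (d - t)) (-k) x := by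
    have : HasDerivAt (fun t : ℝ => d - t) (-1 : ℝ) x := by
      simpa using (hasDerivAt_id x).const_sub d
    simpa [mul_comm] using this.const_mul k
  simpa [mul_comm] using hl.exp

lemma hExpL (k x : ℝ) :
    HasDerivAt (fun s => Real.exp (k * s)) (k * Real.exp (k * x)) x := by
  have hl : HasDerivAt (fun s : ℝ => k * s) k x := by
    simpa using (hasDerivAt_id x).const_mul k
  simpa [mul_comm] using hl.exp

/-- ∂₁ V -/
noncomputable def D1 (a b x₁ x₂ : ℝ) : ℝ :=
  (-3 * (a + 2 * b)) * Real.exp (-3 * (a + 2 * b) * (x₁ - x₂))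
    + ((a + 2 * b) / (a - b)) * ((-3 * (a + 2 * b)) * Real.exp (-3 * (a + 2 * b) * (x₁ - x₂)))
        * Real.exp (-3 * (2 * a + b) * x₂)
    - ((a + 2 * b) / (a - b)) * ((-3 * (2 * a + b)) * Real.exp (-3 * (2 * a + b) * x₁))

/-- ∂₂ V -/
noncomputable def D2 (a b x₁ x₂ : ℝ) : ℝ :=
  (3 * (a + 2 * b)) * Real.exp (-3 * (a + 2 * b) * (x₁ - x₂))
    + ((a + 2 * b) / (a - b)) * ((3 * (a + 2 * b)) * Real.exp (-3 * (a + 2 * b) * (x₁ - x₂)))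
        * Real.exp (-3 * (2 * a + b) * x₂)
    + ((a + 2 * b) / (a - b)) * Real.exp (-3 * (a + 2 * b) * (x₁ - x₂))
        * ((-3 * (2 * a + b)) * Real.exp (-3 * (2 * a + b) * x₂))

lemma hasDerivAt_V1 (a b x₁ x₂ : ℝ) :
    HasDerivAt (fun s => Vdiff a b s x₂) (D1 a b x₁ x₂) x₁ := by
  unfold Vdiff D1
  have h1 := hExpA1 (-3 * (a + 2 * b)) x₂ x₁
  have h3 := hExpL (-3 * (2 * a + b)) x₁
  have h2 := ((h1.const_mul ((a + 2 * b) / (a - b))).mul_const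
      (Real.exp (-3 * (2 * a + b) * x₂)))
  have := (h1.add h2).sub (h3.const_mul ((a + 2 * b) / (a - b)))
  exact this.congr_deriv (by ring)

lemma hasDerivAt_V2 (a b x₁ x₂ : ℝ) :
    HasDerivAt (fun t => Vdiff a b x₁ t) (D2 a b x₁ x₂) x₂ := by
  unfold Vdiff D2
  have h1 := hExpA2 (-3 * (a + 2 * b)) x₁ x₂
  have hg := hExpL (-3 * (2 * a + b)) x₂
  have h2 := (h1.const_mul ((a + 2 * b) / (a - b))).mul hg
  have := ((h1.add h2).sub_const
      (((a + 2 * b) / (a - b)) * Real.exp (-3 * (2 * a + b) * x₁)))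
  exact this.congr_deriv (by ring)

lemma hasDerivAt_D1_1 (a b x₁ x₂ : ℝ) :
    HasDerivAt (fun s => D1 a b s x₂)
      ((-3 * (a + 2 * b)) * ((-3 * (a + 2 * b)) * Real.exp (-3 * (a + 2 * b) * (x₁ - x₂)))
        + ((a + 2 * b) / (a - b)) * ((-3 * (a + 2 * b)) *
            ((-3 * (a + 2 * b)) * Real.exp (-3 * (a + 2 * b) * (x₁ - x₂))))
            * Real.exp (-3 * (2 * a + b) * x₂)
        - ((a + 2 * b) / (a - b)) * ((-3 * (2 * a + b)) *
            ((-3 * (2 * a + b)) * Real.exp (-3 * (2 * a + b) * x₁)))) x₁ := by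
  unfold D1
  have h1 := (hExpA1 (-3 * (a + 2 * b)) x₂ x₁).const_mul (-3 * (a + 2 * b))
  have h3 := (hExpL (-3 * (2 * a + b)) x₁).const_mul (-3 * (2 * a + b))
  have h2 := ((h1.const_mul ((a + 2 * b) / (a - b))).mul_const
      (Real.exp (-3 * (2 * a + b) * x₂)))
  have := (h1.add h2).sub (h3.const_mul ((a + 2 * b) / (a - b)))
  exact this.congr_deriv (by ring)

lemma hasDerivAt_D2_1 (a b x₁ x₂ : ℝ) :
    HasDerivAt (fun s => D2 a b s x₂)
      ((3 * (a + 2 * b)) * ((-3 * (a + 2 * b)) * Real.exp (-3 * (a + 2 * b) * (x₁ - x₂)))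
        + ((a + 2 * b) / (a - b)) * ((3 * (a + 2 * b)) *
            ((-3 * (a + 2 * b)) * Real.exp (-3 * (a + 2 * b) * (x₁ - x₂))))
            * Real.exp (-3 * (2 * a + b) * x₂)
        + ((a + 2 * b) / (a - b)) *
            ((-3 * (a + 2 * b)) * Real.exp (-3 * (a + 2 * b) * (x₁ - x₂)))
            * ((-3 * (2 * a + b)) * Real.exp (-3 * (2 * a + b) * x₂))) x₁ := by
  unfold D2
  have h1 := (hExpA1 (-3 * (a + 2 * b)) x₂ x₁).const_mul (3 * (a + 2 * b))
  have h2 := ((h1.const_mul ((a + 2 * b) / (a - b))).mul_const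
      (Real.exp (-3 * (2 * a + b) * x₂)))
  have h3 := (((hExpA1 (-3 * (a + 2 * b)) x₂ x₁).const_mul
      ((a + 2 * b) / (a - b))).mul_const
      ((-3 * (2 * a + b)) * Real.exp (-3 * (2 * a + b) * x₂)))
  have := (h1.add h2).add h3
  exact this.congr_deriv (by ring)

lemma hasDerivAt_D2_2 (a b x₁ x₂ : ℝ) :
    HasDerivAt (fun t => D2 a b x₁ t)
      ((3 * (a + 2 * b)) * ((3 * (a + 2 * b)) * Real.exp (-3 * (a + 2 * b) * (x₁ - x₂)))
        + ((a + 2 * b) / (a - b)) * ((3 * (a + 2 * b)) *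
            ((3 * (a + 2 * b)) * Real.exp (-3 * (a + 2 * b) * (x₁ - x₂))))
            * Real.exp (-3 * (2 * a + b) * x₂)
        + ((a + 2 * b) / (a - b)) * ((3 * (a + 2 * b)) *
            Real.exp (-3 * (a + 2 * b) * (x₁ - x₂)))
            * ((-3 * (2 * a + b)) * Real.exp (-3 * (2 * a + b) * x₂))
        + ((a + 2 * b) / (a - b)) * ((3 * (a + 2 * b)) *
            Real.exp (-3 * (a + 2 * b) * (x₁ - x₂)))
            * ((-3 * (2 * a + b)) * Real.exp (-3 * (2 * a + b) * x₂))
        + ((a + 2 * b) / (a - b)) * Real.exp (-3 * (a + 2 * b) * (x₁ - x₂))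
            * ((-3 * (2 * a + b)) * ((-3 * (2 * a + b)) * Real.exp (-3 * (2 * a + b) * x₂)))) x₂ := by
  unfold D2
  have h1 := (hExpA2 (-3 * (a + 2 * b)) x₁ x₂).const_mul (3 * (a + 2 * b))
  have hg := hExpL (-3 * (2 * a + b)) x₂
  have hg2 := (hExpL (-3 * (2 * a + b)) x₂).const_mul (-3 * (2 * a + b))
  have h2 := (h1.const_mul ((a + 2 * b) / (a - b))).mul hg
  have h3 := ((hExpA2 (-3 * (a + 2 * b)) x₁ x₂).const_mul ((a + 2 * b) / (a - b))).mul hg2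
  have := (h1.add h2).add h3
  exact this.congr_deriv (by ring)

/-- V satisfies LV = 0 on B = {x : x₂ ≥ 0, x₁ > x₂}, where
Lf = (2a+b)f_{x₁} + (a-b)f_{x₂} + (1/6)(2f_{x₁x₁} + 2f_{x₁x₂} + 2f_{x₂x₂}),
and the Neumann condition ∂₂V = 0 on {x₂ = 0}. -/
theorem Vdiff_harmonic_and_Neumann
    (a b : ℝ) (ha : 0 < a) (hb : 0 < b) (hab : a ≠ b) :
    (∀ x₁ x₂ : ℝ, 0 ≤ x₂ → x₂ < x₁ →
      (2 * a + b) * deriv (fun s => Vdiff a b s x₂) x₁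
        + (a - b) * deriv (fun t => Vdiff a b x₁ t) x₂
        + (1 / 6) *
            (2 * deriv (fun s => deriv (fun s' => Vdiff a b s' x₂) s) x₁
              + 2 * deriv (fun s => deriv (fun t => Vdiff a b s t) x₂) x₁
              + 2 * deriv (fun t => deriv (fun t' => Vdiff a b x₁ t') t) x₂)
      = 0)
    ∧ (∀ x₁ : ℝ, deriv (fun t => Vdiff a b x₁ t) 0 = 0) := by
  have hab' : a - b ≠ 0 := sub_ne_zero.mpr hab
  constructor
  · intro x₁ x₂ _ _
    have e1 : (fun s => deriv (fun s' => Vdiff a b s' x₂) s) = fun s => D1 a b s x₂ :=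
      funext fun s => (hasDerivAt_V1 a b s x₂).deriv
    have e2 : (fun s => deriv (fun t => Vdiff a b s t) x₂) = fun s => D2 a b s x₂ :=
      funext fun s => (hasDerivAt_V2 a b s x₂).deriv
    have e3 : (fun t => deriv (fun t' => Vdiff a b x₁ t') t) = fun t => D2 a b x₁ t :=
      funext fun t => (hasDerivAt_V2 a b x₁ t).deriv
    rw [e1, e2, e3, (hasDerivAt_V1 a b x₁ x₂).deriv, (hasDerivAt_V2 a b x₁ x₂).deriv,
      (hasDerivAt_D1_1 a b x₁ x₂).deriv, (hasDerivAt_D2_1 a b x₁ x₂).deriv,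
      (hasDerivAt_D2_2 a b x₁ x₂).deriv]
    unfold D1 D2
    field_simp
    ring
  · intro x₁
    rw [(hasDerivAt_V2 a b x₁ 0).deriv]
    unfold D2
    simp only [mul_zero, Real.exp_zero, sub_zero, mul_one]
    field_simp
    ring
end
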